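/- Let G be a group, let T be a G-tree, and let g, h, h' be elements of G that are loxodromic in T. If the distance between the closest-point projection of Axis_T(h) onto Axis_T(g) and the closest-point projection of Axis_T(h') onto Axis_T(g) is greater than the translation length ||g||_T, then the characteristic set of gh and the axis of h' are disjoint. -/

import Mathlib

noncomputable section

open Metric Set

universe u v

/-- A geodesic metric space: any two points are joined by an isometrically
parametrized segment. -/
def GeodesicSpace (Y : Type*) [MetricSpace Y] : Prop :=
  ∀ x y : Y, ∃ f : ℝ → Y, f 0 = x ∧ f (dist x y) = y ∧
    ∀ s ∈ Set.Icc (0:ℝ) (dist x y), ∀ t ∈ Set.Icc (0:ℝ) (dist x y),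
      dist (f s) (f t) = |s - t|

/-- Gromov hyperbolicity (four-point condition) with constant `δ`. -/
def GromovHyperbolic (Y : Type*) [MetricSpace Y] (δ : ℝ) : Prop :=
  ∀ x y z w : Y, dist x y + dist z w ≤ max (dist x z + dist y w) (dist x w + dist y z) + 2 * δ

/-- A Gromov hyperbolic geodesic metric space. -/
def HyperbolicGeodesicSpace (Y : Type*) [MetricSpace Y] : Prop :=
  GeodesicSpace Y ∧ ∃ δ : ℝ, 0 ≤ δ ∧ GromovHyperbolic Y δ

/-- An isometric action `ρ` of `G` on `Y` is acylindrical if for every `R > 0` there are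
`L > 0` and `N` such that for any two points at distance `> L`, at most `N` elements of `G`
move both points by less than `R`. -/
def IsAcylindrical {G : Type*} [Group G] {Y : Type*} [MetricSpace Y] (ρ : G →* (Y ≃ᵢ Y)) : Prop :=
  ∀ R : ℝ, 0 < R → ∃ L : ℝ, 0 < L ∧ ∃ N : ℕ, ∀ x y : Y, L < dist x y →
    ∃ s : Finset G, s.card ≤ N ∧
      ∀ g : G, dist x (ρ g x) < R → dist y (ρ g y) < R → g ∈ s

/-- A group is virtually cyclic if it has a cyclic subgroup of finite index. -/
def VirtuallyCyclic (G : Type*) [Group G] : Prop :=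
  ∃ H : Subgroup G, H.FiniteIndex ∧ IsCyclic ↥H

/-- A group is acylindrically hyperbolic if it is not virtually cyclic and admits an
acylindrical isometric action with unbounded orbits on a Gromov hyperbolic geodesic space
(this is equivalent to admitting a nonelementary acylindrical action on such a space). -/
def AcylindricallyHyperbolic (G : Type u) [Group G] : Prop :=
  ¬ VirtuallyCyclic G ∧
    ∃ (Y : Type u) (_ : MetricSpace Y) (ρ : G →* (Y ≃ᵢ Y)),
      HyperbolicGeodesicSpace Y ∧ IsAcylindrical ρ ∧
      ∃ y : Y, ¬ Bornology.IsBounded (Set.range fun g : G => ρ g y)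

/-- The metric segment between `x` and `y`; in a real tree this is the unique arc
joining `x` to `y`. -/
def seg {T : Type*} [MetricSpace T] (x y : T) : Set T :=
  {z : T | dist x z + dist z y = dist x y}

/-- `A` is a (parametrized) arc from `x` to `y`. -/
def IsArcBetween {T : Type*} [MetricSpace T] (x y : T) (A : Set T) : Prop :=
  ∃ f : ℝ → T, ContinuousOn f (Set.Icc 0 1) ∧ Set.InjOn f (Set.Icc 0 1) ∧
    f 0 = x ∧ f 1 = y ∧ A = f '' Set.Icc 0 1

/-- A real tree: a geodesic metric space in which every pair of points is joined by a
unique arc. -/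
def IsRealTree (T : Type*) [MetricSpace T] : Prop :=
  GeodesicSpace T ∧
    ∀ (x y : T) (A B : Set T), IsArcBetween x y A → IsArcBetween x y B → A = B

section TreeAction

variable {G : Type*} [Group G] {T : Type*} [MetricSpace T]

/-- Translation length of `g` for the action `ρ`. -/
def transLen (ρ : G →* (T ≃ᵢ T)) (g : G) : ℝ := ⨅ x : T, dist x (ρ g x)

/-- The characteristic set of `g`: the set of points minimally displaced by `g`.
For an elliptic element this is its fixed-point set, and for a loxodromic element
this is its axis. -/
def charSet (ρ : G →* (T ≃ᵢ T)) (g : G) : Set T :=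
  {x : T | dist x (ρ g x) = transLen ρ g}

/-- `g` is elliptic: it fixes a point. -/
def Elliptic (ρ : G →* (T ≃ᵢ T)) (g : G) : Prop := ∃ x : T, ρ g x = x

/-- `A` is an axis for `g`: an invariant isometric copy of `ℝ` on which `g` acts as a
nontrivial translation. -/
def IsAxis (ρ : G →* (T ≃ᵢ T)) (g : G) (A : Set T) : Prop :=
  (∃ f : ℝ → T, Isometry f ∧ Set.range f = A) ∧
  (∀ x : T, x ∈ A ↔ ρ g x ∈ A) ∧
  ∃ τ : ℝ, 0 < τ ∧ ∀ x ∈ A, dist x (ρ g x) = τ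

/-- `g` is loxodromic: it has an axis. (For a loxodromic element `g`, the axis coincides
with `charSet ρ g`.) -/
def Loxodromic (ρ : G →* (T ≃ᵢ T)) (g : G) : Prop := ∃ A : Set T, IsAxis ρ g A

/-- A subtree is a convex subset. -/
def IsSubtree {T' : Type*} [MetricSpace T'] (A : Set T') : Prop :=
  ∀ x ∈ A, ∀ y ∈ A, seg x y ⊆ A

/-- The action is minimal: there is no proper nonempty invariant subtree. -/
def MinimalTreeAction (ρ : G →* (T ≃ᵢ T)) : Prop :=
  ∀ A : Set T, A.Nonempty → IsSubtree A → (∀ (g : G), ∀ x ∈ A, ρ g x ∈ A) → A = Set.univ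

/-- The action is nonelementary: there are two loxodromic elements whose axes intersect
in a compact (possibly empty) set. -/
def NonelementaryTreeAction (ρ : G →* (T ≃ᵢ T)) : Prop :=
  ∃ g h : G, Loxodromic ρ g ∧ Loxodromic ρ h ∧
    IsCompact (charSet ρ g ∩ charSet ρ h)

end TreeAction

section TreeMore

variable {G : Type*} [Group G] {T : Type*} [MetricSpace T]

/-- Pointwise stabilizer of a subset of `T`. -/
def setStabilizer (ρ : G →* (T ≃ᵢ T)) (s : Set T) : Subgroup G where
  carrier := {g : G | ∀ z ∈ s, ρ g z = z}
  one_mem' := fun z _ => by simp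
  mul_mem' := @fun a b ha hb z hz => by
    have h1 : (ρ (a * b)) z = ρ a (ρ b z) := by rw [map_mul]; rfl
    rw [h1, hb z hz, ha z hz]
  inv_mem' := @fun a ha z hz => by
    have h1 : ρ a z = z := ha z hz
    calc ρ a⁻¹ z = ρ a⁻¹ (ρ a z) := by rw [h1]
    _ = (ρ a⁻¹ * ρ a) z := rfl
    _ = z := by rw [← map_mul]; simp

/-- Closest-point projection of the subset `A` onto the subset `B`. -/
def projSet {T' : Type*} [MetricSpace T'] (A B : Set T') : Set T' :=
  {y : T' | y ∈ B ∧ ∃ x ∈ A, dist x y = Metric.infDist x B}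

/-- The bridge between two subsets `A, B`: the shortest segment from a point of `A`
to a point of `B`. -/
def IsBridge {T' : Type*} [MetricSpace T'] (A B I : Set T') : Prop :=
  ∃ a b : T', a ∈ A ∧ b ∈ B ∧ I = seg a b ∧
    ∀ a' ∈ A, ∀ b' ∈ B, dist a b ≤ dist a' b'

/-- `u` and `v` are the endpoints of an edge of the simplicial structure with vertex
set `V`. -/
def IsSimpEdge {T' : Type*} [MetricSpace T'] (V : Set T') (u v : T') : Prop :=
  u ∈ V ∧ v ∈ V ∧ u ≠ v ∧ seg u v ∩ V = {u, v}

/-- `V` is the vertex set of a `G`-invariant simplicial structure on the tree `T`,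
all of whose edges have length `1` (the simplicial metric). -/
def IsUnitSimplicial (ρ : G →* (T ≃ᵢ T)) (V : Set T) : Prop :=
  (∀ (g : G), ∀ v ∈ V, ρ g v ∈ V) ∧
  (∀ u ∈ V, ∀ v ∈ V, u ≠ v → 1 ≤ dist u v) ∧
  (∀ u v : T, IsSimpEdge V u v → dist u v = 1) ∧
  (∀ x : T, ∃ u ∈ V, ∃ v ∈ V, x ∈ seg u v)

/-- `V` is the vertex set of a `G`-invariant simplicial structure on the tree `T`
(with arbitrary edge lengths). -/
def IsSimplicialStructure (ρ : G →* (T ≃ᵢ T)) (V : Set T) : Prop :=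
  (∀ (g : G), ∀ v ∈ V, ρ g v ∈ V) ∧
  (∀ u ∈ V, ∀ v ∈ V, (seg u v ∩ V).Finite) ∧
  (∀ x : T, ∃ u ∈ V, ∃ v ∈ V, x ∈ seg u v)

/-- `g` is an `(L,N)`-WPD element for the action on the tree `T`: it is loxodromic and
the pointwise stabiliser of every arc of its axis of length at least `L` has at most
`N` elements. -/
def IsLNWPD (ρ : G →* (T ≃ᵢ T)) (L : ℝ) (N : ℕ) (g : G) : Prop :=
  Loxodromic ρ g ∧
  ∀ x y : T, x ∈ charSet ρ g → y ∈ charSet ρ g → L ≤ dist x y →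
    ∃ s : Finset G, s.card ≤ N ∧ ∀ k : G, (∀ z ∈ seg x y, ρ k z = z) → k ∈ s

/-- WPD element of a group action on a simplicial tree. -/
def IsTreeWPD (ρ : G →* (T ≃ᵢ T)) (g : G) : Prop :=
  ∃ L : ℝ, 0 ≤ L ∧ ∃ N : ℕ, IsLNWPD ρ L N g

end TreeMore

/-!
Let `A`, `B` be the axes of `g`, `h`, let `x ∈ Axis(h')` and let `q` be its projection to `A`.
Since `q` is far from the projection of `B` to `A`, the projections to `B` of `x` and of `g⁻¹ x`
(whose projection to `A` is `g⁻¹ q`, within `‖g‖` of `q`) coincide at a point `w`. Hence the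
geodesic from `g⁻¹ x` to `h x` runs through `w` and `h w`, and
`d(x, g h x) = d(g⁻¹ x, h x) > ‖g‖ + ‖h‖ + 2 d(p, w) ≥ d(p, g h p)` for the projection `p` of `w`
to `A`, so `x` is not minimally displaced by `g h`.

The tree geometry enters through medians of triangles, which exist because arcs are unique: they
make projections to a line gates, and join points with distinct gates through both gates.
-/

section RealTree

variable {T : Type*} [MetricSpace T]

lemma seg_comm (x y : T) : seg x y = seg y x := by
  ext z
  simp only [seg, mem_ofPred_eq, dist_comm, add_comm]

lemma left_mem_seg (x y : T) : x ∈ seg x y := by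
  simp [seg]

lemma eq_of_mem_seg_self {x z : T} (hz : z ∈ seg x x) : z = x := by
  have : dist x z + dist z x = dist x x := hz
  rw [dist_self, dist_comm] at this
  exact dist_eq_zero.1 (by linarith [dist_nonneg (x := z) (y := x)])

lemma isArcBetween_image_Icc {F : ℝ → T} {a b : ℝ} (hab : a < b)
    (hF : ContinuousOn F (Icc a b)) (hinj : InjOn F (Icc a b)) :
    IsArcBetween (F a) (F b) (F '' Icc a b) := by
  have himage : (fun r : ℝ => (b - a) * r + a) '' Icc 0 1 = Icc a b := by
    rw [image_affine_Icc' (sub_pos.2 hab)]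
    congr 1 <;> ring
  have hmaps : MapsTo (fun r : ℝ => (b - a) * r + a) (Icc 0 1) (Icc a b) :=
    himage ▸ mapsTo_image _ _
  refine ⟨fun r => F ((b - a) * r + a), hF.comp (by fun_prop) hmaps,
    hinj.comp (fun r _ s _ hrs => ?_) hmaps, by simp, by simp, by rw [← himage, image_image]⟩
  exact mul_left_cancel₀ (sub_pos.2 hab).ne' (add_right_cancel hrs)

lemma continuousOn_Icc_ite {F G : ℝ → T} {a b c : ℝ} (hF : ContinuousOn F (Icc a b))
    (hG : ContinuousOn G (Icc b c)) (hb : F b = G b) :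
    ContinuousOn (fun t => if t ≤ b then F t else G t) (Icc a c) := by
  refine ((hF.congr fun t ht => if_pos ht.2).union_of_isClosed (hG.congr fun t ht => ?_)
    isClosed_Icc isClosed_Icc).mono Icc_subset_Icc_union_Icc
  split_ifs with h
  · rw [le_antisymm h ht.1, hb]
  · rfl

def IsGeodesicSegment (f : ℝ → T) (x y : T) : Prop :=
  f 0 = x ∧ f (dist x y) = y ∧
    ∀ s ∈ Icc (0 : ℝ) (dist x y), ∀ t ∈ Icc (0 : ℝ) (dist x y), dist (f s) (f t) = |s - t|

namespace IsGeodesicSegment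

variable {f : ℝ → T} {x y : T} {t : ℝ}

lemma dist_left (hf : IsGeodesicSegment f x y) (ht : t ∈ Icc 0 (dist x y)) :
    dist x (f t) = t := by
  have := hf.2.2 0 ⟨le_rfl, dist_nonneg⟩ t ht
  rwa [hf.1, zero_sub, abs_neg, abs_of_nonneg ht.1] at this

lemma dist_right (hf : IsGeodesicSegment f x y) (ht : t ∈ Icc 0 (dist x y)) :
    dist (f t) y = dist x y - t := by
  have := hf.2.2 t ht _ ⟨dist_nonneg, le_rfl⟩
  rwa [hf.2.1, abs_of_nonpos (sub_nonpos.2 ht.2), neg_sub] at this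

lemma mem_seg (hf : IsGeodesicSegment f x y) (ht : t ∈ Icc 0 (dist x y)) : f t ∈ seg x y := by
  show dist x (f t) + dist (f t) y = dist x y
  rw [hf.dist_left ht, hf.dist_right ht, add_sub_cancel]

lemma continuousOn (hf : IsGeodesicSegment f x y) : ContinuousOn f (Icc 0 (dist x y)) :=
  (LipschitzOnWith.of_dist_le_mul (K := 1) fun s hs t ht => by
    rw [hf.2.2 s hs t ht, NNReal.coe_one, one_mul, Real.dist_eq]).continuousOn

lemma injOn (hf : IsGeodesicSegment f x y) : InjOn f (Icc 0 (dist x y)) := fun s hs t ht hst => by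
  rw [← hf.dist_left hs, ← hf.dist_left ht, hst]

lemma isArcBetween (hf : IsGeodesicSegment f x y) (hxy : x ≠ y) :
    IsArcBetween x y (f '' Icc 0 (dist x y)) := by
  simpa only [hf.1, hf.2.1] using isArcBetween_image_Icc (dist_pos.2 hxy) hf.continuousOn hf.injOn

lemma exists_branchPoint {f₁ f₂ : ℝ → T} {z : T} (hf₁ : IsGeodesicSegment f₁ x y)
    (hf₂ : IsGeodesicSegment f₂ x z) :
    ∃ c ∈ Icc 0 (min (dist x y) (dist x z)), f₁ c = f₂ c ∧
      ∀ t ∈ Ioc c (min (dist x y) (dist x z)), f₁ t ≠ f₂ t := by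
  set S : Set ℝ := Icc 0 (min (dist x y) (dist x z)) ∩ {t | f₁ t = f₂ t}
  have hSclosed : IsClosed S :=
    ContinuousOn.preimage_isClosed_of_isClosed
      ((hf₁.continuousOn.mono (Icc_subset_Icc_right (min_le_left _ _))).prodMk
        (hf₂.continuousOn.mono (Icc_subset_Icc_right (min_le_right _ _))))
      isClosed_Icc isClosed_diagonal
  have hSbdd : BddAbove S := bddAbove_Icc.mono inter_subset_left
  have hS₀ : (0 : ℝ) ∈ S := ⟨⟨le_rfl, le_min dist_nonneg dist_nonneg⟩, hf₁.1.trans hf₂.1.symm⟩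
  have hc : sSup S ∈ S := hSclosed.csSup_mem ⟨0, hS₀⟩ hSbdd
  exact ⟨sSup S, hc.1, hc.2, fun t ht heq =>
    not_le.2 ht.1 (le_csSup hSbdd ⟨⟨hc.1.1.trans ht.1.le, ht.2⟩, heq⟩)⟩

lemma isArcBetween_branch {f₁ f₂ : ℝ → T} {z : T} (hf₁ : IsGeodesicSegment f₁ x y)
    (hf₂ : IsGeodesicSegment f₂ x z) {c : ℝ} (hc₀ : 0 ≤ c) (hc₁ : c ≤ dist x y)
    (hc₂ : c ≤ dist x z) (hfc : f₁ c = f₂ c)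
    (hsplit : ∀ t ∈ Ioc c (min (dist x y) (dist x z)), f₁ t ≠ f₂ t)
    (hlt : c - dist x y < dist x z - c) :
    IsArcBetween y z ((fun t => if t ≤ 0 then f₁ (c - t) else f₂ (c + t)) ''
      Icc (c - dist x y) (dist x z - c)) := by
  set I := Icc (c - dist x y) (dist x z - c)
  set P : ℝ → T := fun t => if t ≤ 0 then f₁ (c - t) else f₂ (c + t) with hP
  have hmem₁ : ∀ t ∈ Icc (c - dist x y) 0, c - t ∈ Icc 0 (dist x y) :=
    fun t ht => ⟨by linarith [ht.2], by linarith [ht.1]⟩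
  have hmem₂ : ∀ t ∈ Icc 0 (dist x z - c), c + t ∈ Icc 0 (dist x z) :=
    fun t ht => ⟨by linarith [ht.1], by linarith [ht.2]⟩
  have hdist : ∀ t ∈ I, dist x (P t) = c + |t| := by
    intro t ht
    by_cases h : t ≤ 0
    · simp only [hP, if_pos h]
      rw [hf₁.dist_left (hmem₁ t ⟨ht.1, h⟩), abs_of_nonpos h, sub_eq_add_neg]
    · simp only [hP, if_neg h, abs_of_pos (not_le.1 h),
        hf₂.dist_left (hmem₂ t ⟨(not_le.1 h).le, ht.2⟩)]
  have hbranch : ∀ t, 0 < t → -t ∈ I → t ∈ I → P (-t) ≠ P t := fun t htpos hnt ht heq => by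
    simp only [hP, if_pos (neg_nonpos.2 htpos.le), if_neg (not_le.2 htpos), sub_neg_eq_add] at heq
    exact hsplit (c + t) ⟨by linarith, le_min (by linarith [hnt.1]) (by linarith [ht.2])⟩ heq
  have hinj : InjOn P I := by
    intro s hs t ht hst
    have habs : |s| = |t| := by linarith [hdist s hs, hdist t ht, congrArg (dist x) hst]
    rcases le_or_gt s 0 with hs₀ | hs₀ <;> rcases le_or_gt t 0 with ht₀ | ht₀
    · rwa [abs_of_nonpos hs₀, abs_of_nonpos ht₀, neg_inj] at habs
    · rw [abs_of_nonpos hs₀, abs_of_pos ht₀] at habs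
      obtain rfl : s = -t := by linarith
      exact absurd hst (hbranch t ht₀ hs ht)
    · rw [abs_of_pos hs₀, abs_of_nonpos ht₀] at habs
      obtain rfl : t = -s := by linarith
      exact absurd hst.symm (hbranch s hs₀ ht hs)
    · rwa [abs_of_pos hs₀, abs_of_pos ht₀] at habs
  have hcont : ContinuousOn P I :=
    continuousOn_Icc_ite (hf₁.continuousOn.comp (by fun_prop) hmem₁)
      (hf₂.continuousOn.comp (by fun_prop) hmem₂) (by simp only [sub_zero, add_zero, hfc])
  have hPy : P (c - dist x y) = y := by
    simp only [hP, if_pos (show c - dist x y ≤ 0 by linarith), sub_sub_cancel, hf₁.2.1]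
  have hPz : P (dist x z - c) = z := by
    by_cases h : dist x z - c ≤ 0
    · simp only [hP, if_pos h]
      rw [show c - (dist x z - c) = c by linarith, hfc, show c = dist x z by linarith, hf₂.2.1]
    · simp only [hP, if_neg h, add_sub_cancel, hf₂.2.1]
  simpa only [hPy, hPz] using isArcBetween_image_Icc hlt hcont hinj

end IsGeodesicSegment

namespace IsRealTree

lemma exists_isGeodesicSegment (hT : IsRealTree T) (x y : T) : ∃ f, IsGeodesicSegment f x y :=
  hT.1 x y

lemma image_eq_of_isArcBetween (hT : IsRealTree T) {f : ℝ → T} {x y : T} {A : Set T}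
    (hf : IsGeodesicSegment f x y) (hA : IsArcBetween x y A) : A = f '' Icc 0 (dist x y) := by
  obtain rfl | hxy := eq_or_ne x y
  · obtain ⟨F, -, hinj, h0, h1, -⟩ := hA
    exact absurd (hinj ⟨le_rfl, zero_le_one⟩ ⟨zero_le_one, le_rfl⟩ (h0.trans h1.symm)) zero_ne_one
  · exact hT.2 x y _ _ hA (hf.isArcBetween hxy)

lemma seg_eq_image (hT : IsRealTree T) {f : ℝ → T} {x y : T} (hf : IsGeodesicSegment f x y) :
    seg x y = f '' Icc 0 (dist x y) := by
  refine Subset.antisymm (fun z hz => ?_) (image_subset_iff.2 fun t ht => hf.mem_seg ht)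
  obtain rfl | hxy := eq_or_ne x y
  · exact ⟨0, ⟨le_rfl, dist_nonneg⟩, hf.1.trans (eq_of_mem_seg_self hz).symm⟩
  have hz : dist x z + dist z y = dist x y := hz
  obtain ⟨f₁, hf₁⟩ := hT.exists_isGeodesicSegment x z
  obtain ⟨f₂, hf₂⟩ := hT.exists_isGeodesicSegment z y
  -- Concatenating geodesics `x → z → y` gives an arc: it is injective since `dist x (F t) = t`.
  set F : ℝ → T := fun t => if t ≤ dist x z then f₁ t else f₂ (t - dist x z) with hF
  have hmem₂ : ∀ t ∈ Icc (dist x z) (dist x y), t - dist x z ∈ Icc 0 (dist z y) :=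
    fun t ht => ⟨by linarith [ht.1], by linarith [ht.2]⟩
  have hdist : ∀ t ∈ Icc 0 (dist x y), dist x (F t) = t := by
    intro t ht
    by_cases h : t ≤ dist x z
    · simp only [hF, if_pos h]
      exact hf₁.dist_left ⟨ht.1, h⟩
    · simp only [hF, if_neg h]
      have hs := hmem₂ t ⟨(not_le.1 h).le, ht.2⟩
      have h₁ := dist_triangle x z (f₂ (t - dist x z))
      have h₂ := dist_triangle x (f₂ (t - dist x z)) y
      rw [hf₂.dist_left hs] at h₁
      rw [hf₂.dist_right hs] at h₂
      linarith
  have hcont : ContinuousOn F (Icc 0 (dist x y)) :=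
    continuousOn_Icc_ite hf₁.continuousOn (hf₂.continuousOn.comp (by fun_prop) hmem₂)
      (by rw [sub_self, hf₁.2.1, hf₂.1])
  have hinj : InjOn F (Icc 0 (dist x y)) := fun s hs t ht hst => by
    rw [← hdist s hs, ← hdist t ht, hst]
  have hF₀ : F 0 = x := by simp only [hF, if_pos (dist_nonneg (x := x) (y := z)), hf₁.1]
  have hF₁ : F (dist x y) = y := by
    by_cases h : dist x y ≤ dist x z
    · have hzy : dist z y = 0 := le_antisymm (by linarith) dist_nonneg
      simp only [hF, if_pos h]
      rw [show dist x y = dist x z by linarith, hf₁.2.1]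
      exact dist_eq_zero.1 hzy
    · simp only [hF, if_neg h]
      rw [← hz, add_sub_cancel_left, hf₂.2.1]
  have harc := isArcBetween_image_Icc (dist_pos.2 hxy) hcont hinj
  rw [hF₀, hF₁] at harc
  rw [← hT.image_eq_of_isArcBetween hf harc]
  exact ⟨dist x z, ⟨dist_nonneg, by linarith [dist_nonneg (x := z) (y := y)]⟩,
    by simp only [hF, le_rfl, if_true, hf₁.2.1]⟩

lemma eq_seg_of_isArcBetween (hT : IsRealTree T) {x y : T} {A : Set T}
    (hA : IsArcBetween x y A) : A = seg x y := by
  obtain ⟨f, hf⟩ := hT.exists_isGeodesicSegment x y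
  rw [hT.seg_eq_image hf, hT.image_eq_of_isArcBetween hf hA]

lemma exists_median (hT : IsRealTree T) (x y z : T) :
    ∃ m, m ∈ seg x y ∧ m ∈ seg x z ∧ m ∈ seg y z := by
  obtain ⟨f₁, hf₁⟩ := hT.exists_isGeodesicSegment x y
  obtain ⟨f₂, hf₂⟩ := hT.exists_isGeodesicSegment x z
  obtain ⟨c, ⟨hc₀, hc⟩, hfc, hsplit⟩ := hf₁.exists_branchPoint hf₂
  have hc₁ : c ≤ dist x y := hc.trans (min_le_left _ _)
  have hc₂ : c ≤ dist x z := hc.trans (min_le_right _ _)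
  refine ⟨f₁ c, hf₁.mem_seg ⟨hc₀, hc₁⟩, hfc ▸ hf₂.mem_seg ⟨hc₀, hc₂⟩, ?_⟩
  obtain hlt | heq := (show c - dist x y ≤ dist x z - c by linarith).lt_or_eq
  · rw [← hT.eq_seg_of_isArcBetween (hf₁.isArcBetween_branch hf₂ hc₀ hc₁ hc₂ hfc hsplit hlt)]
    exact ⟨0, ⟨by linarith, by linarith⟩, by simp only [le_rfl, if_true, sub_zero]⟩
  · have hy : f₁ c = y := by rw [show c = dist x y by linarith, hf₁.2.1]
    have hz : f₁ c = z := by rw [hfc, show c = dist x z by linarith, hf₂.2.1]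
    rw [← hy, ← hz]
    exact left_mem_seg _ _

lemma mem_seg_of_dist_le (hT : IsRealTree T) {a b u v : T} (hu : u ∈ seg a b) (hv : v ∈ seg a b)
    (h : dist a u ≤ dist a v) : u ∈ seg a v := by
  obtain ⟨f, hf⟩ := hT.exists_isGeodesicSegment a b
  rw [hT.seg_eq_image hf] at hu hv
  obtain ⟨s, hs, rfl⟩ := hu
  obtain ⟨t, ht, rfl⟩ := hv
  rw [hf.dist_left hs, hf.dist_left ht] at h
  show dist a (f s) + dist (f s) (f t) = dist a (f t)
  rw [hf.dist_left hs, hf.dist_left ht, hf.2.2 s hs t ht, abs_of_nonpos (by linarith)]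
  ring

lemma isSubtree_range (hT : IsRealTree T) {f : ℝ → T} (hf : Isometry f) : IsSubtree (range f) := by
  rintro _ ⟨s, rfl⟩ _ ⟨t, rfl⟩
  wlog hst : s ≤ t generalizing s t
  · rw [seg_comm]
    exact this t s (le_of_not_ge hst)
  have hd : dist (f s) (f t) = t - s := by
    rw [hf.dist_eq, Real.dist_eq, abs_of_nonpos (by linarith), neg_sub]
  have hg : IsGeodesicSegment (fun r => f (s + r)) (f s) (f t) := by
    refine ⟨by simp only [add_zero], by simp only [hd, add_sub_cancel], fun a _ b _ => ?_⟩
    rw [hf.dist_eq, Real.dist_eq, add_sub_add_left_eq_sub]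
  rw [hT.seg_eq_image hg]
  exact image_subset_iff.2 fun r _ => mem_range_self _

end IsRealTree

end RealTree

section Gate

variable {T : Type*} [MetricSpace T] {A B : Set T} {z p : T}

def IsGate (A : Set T) (z p : T) : Prop :=
  p ∈ A ∧ ∀ c ∈ A, dist z c = dist z p + dist p c

lemma IsGate.infDist_eq (h : IsGate A z p) : infDist z A = dist z p := by
  refine le_antisymm (infDist_le_dist_of_mem h.1) ((le_infDist ⟨p, h.1⟩).2 fun c hc => ?_)
  rw [h.2 c hc]
  exact le_add_of_nonneg_right dist_nonneg

lemma IsGate.mem_projSet (h : IsGate A z p) (hz : z ∈ B) : p ∈ projSet B A :=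
  ⟨h.1, z, hz, h.infDist_eq.symm⟩

lemma IsGate.map {φ : T ≃ᵢ T} (hA : ∀ c, c ∈ A ↔ φ c ∈ A) (h : IsGate A z p) :
    IsGate A (φ z) (φ p) := by
  refine ⟨(hA p).1 h.1, fun c hc => ?_⟩
  obtain ⟨c, rfl⟩ := φ.surjective c
  rw [φ.dist_eq, φ.dist_eq, φ.dist_eq]
  exact h.2 c ((hA c).2 hc)

namespace IsRealTree

lemma isGate_of_forall_dist_le (hT : IsRealTree T) (hA : IsSubtree A) (hp : p ∈ A)
    (hmin : ∀ c ∈ A, dist z p ≤ dist z c) : IsGate A z p := by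
  refine ⟨hp, fun c hc => ?_⟩
  obtain ⟨m, hzp, hzc, hpc⟩ := hT.exists_median z p c
  have hzp : dist z m + dist m p = dist z p := hzp
  have hmp : m = p :=
    dist_eq_zero.1 (by linarith [hmin m (hA p hp c hc hpc), dist_nonneg (x := m) (y := p)])
  rw [hmp] at hzc
  exact hzc.symm

open Filter in
lemma exists_isGate_range (hT : IsRealTree T) {f : ℝ → T} (hf : Isometry f) (z : T) :
    ∃ p, IsGate (range f) z p := by
  have hcoercive : Tendsto (fun t => dist z (f t)) (cocompact ℝ) atTop := by
    refine tendsto_atTop_mono (fun t => ?_)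
      (tendsto_atTop_add_const_right _ (-dist (f 0) z) (tendsto_dist_left_cocompact_atTop 0))
    have := dist_triangle (f 0) z (f t)
    rw [hf.dist_eq] at this
    linarith
  obtain ⟨t₀, ht₀⟩ := (continuous_const.dist hf.continuous).exists_forall_le hcoercive
  exact ⟨f t₀, hT.isGate_of_forall_dist_le (hT.isSubtree_range hf) (mem_range_self _)
    (forall_mem_range.2 ht₀)⟩

lemma dist_eq_of_isGate_ne (hT : IsRealTree T) (hA : IsSubtree A) {z₁ z₂ p₁ p₂ : T}
    (h₁ : IsGate A z₁ p₁) (h₂ : IsGate A z₂ p₂) (hne : p₁ ≠ p₂) :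
    dist z₁ z₂ = dist z₁ p₁ + dist p₁ p₂ + dist p₂ z₂ := by
  obtain ⟨m, hm₁, hm₂, hm₃⟩ := hT.exists_median z₁ p₁ z₂
  have hm₁ : dist z₁ m + dist m p₁ = dist z₁ p₁ := hm₁
  have hm₂ : dist z₁ m + dist m z₂ = dist z₁ z₂ := hm₂
  have hm₃ : dist p₁ m + dist m z₂ = dist p₁ z₂ := hm₃
  have hp₂' : dist p₁ p₂ + dist p₂ z₂ = dist p₁ z₂ := by
    linarith [h₂.2 p₁ h₁.1, dist_comm p₁ p₂, dist_comm p₂ z₂, dist_comm p₁ z₂]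
  have hp₂ : p₂ ∈ seg p₁ z₂ := hp₂'
  rcases le_or_gt (dist p₁ m) (dist p₁ p₂) with hle | hlt
  · -- the median lies in `A` between `p₁` and `p₂`, so it is `p₁`
    have hmA : m ∈ A := hA p₁ h₁.1 p₂ h₂.1 (hT.mem_seg_of_dist_le hm₃ hp₂ hle)
    have hmp : dist p₁ m = 0 := by linarith [h₁.2 m hmA, dist_comm m p₁]
    linarith [dist_comm m p₁]
  · -- otherwise `p₂` would be closer to `z₁` than `p₁`
    have hp₂m : dist p₁ p₂ + dist p₂ m = dist p₁ m := hT.mem_seg_of_dist_le hp₂ hm₃ hlt.le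
    linarith [dist_triangle z₁ m p₂, h₁.2 p₂ h₂.1, dist_comm m p₁, dist_comm p₂ m,
      dist_pos.2 hne]

lemma dist_eq_add_of_isGate_ne (hT : IsRealTree T) (hA : IsSubtree A) {b u : T}
    (hz : IsGate A z p) (hb : IsGate A b u) (hne : p ≠ u) : dist z b = dist z p + dist p b := by
  rw [hT.dist_eq_of_isGate_ne hA hz hb hne]
  linarith [hb.2 p hz.1, dist_comm p b, dist_comm u p, dist_comm u b]

lemma isGate_eq_of_dist_lt (hT : IsRealTree T) (hA : IsSubtree A) {z₁ z₂ p₁ p₂ : T}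
    (h₁ : IsGate A z₁ p₁) (h₂ : IsGate A z₂ p₂) (hlt : dist z₁ z₂ < dist z₂ p₂) : p₁ = p₂ := by
  by_contra hne
  linarith [hT.dist_eq_of_isGate_ne hA h₁ h₂ hne, dist_comm p₂ z₂,
    dist_nonneg (x := z₁) (y := p₁), dist_nonneg (x := p₁) (y := p₂)]

lemma isGate_of_isGate_of_forall_ne (hT : IsRealTree T) (hA : IsSubtree A) {q w : T}
    (hq : IsGate A z q) (hw : IsGate B q w) (hB : ∀ b ∈ B, ∃ u, IsGate A b u ∧ u ≠ q) :
    IsGate B z w := by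
  have key : ∀ b ∈ B, dist z b = dist z q + dist q b := fun b hb => by
    obtain ⟨u, hu, hne⟩ := hB b hb
    exact hT.dist_eq_add_of_isGate_ne hA hq hu hne.symm
  refine ⟨hw.1, fun b hb => ?_⟩
  rw [key b hb, key w hw.1, hw.2 b hb]
  ring

end IsRealTree

end Gate

section Action

variable {G : Type*} [Group G] {T : Type*} [MetricSpace T] (ρ : G →* (T ≃ᵢ T))

lemma transLen_le_dist (g : G) (z : T) : transLen ρ g ≤ dist z (ρ g z) :=
  ciInf_le ⟨0, forall_mem_range.2 fun _ => dist_nonneg⟩ z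

lemma dist_inv_apply (g : G) (z : T) : dist (ρ g⁻¹ z) z = dist z (ρ g z) := by
  rw [← (ρ g).dist_eq, map_inv, IsometryEquiv.apply_inv_self, dist_comm]

lemma dist_mul_apply (g h : G) (z : T) :
    dist z (ρ (g * h) z) = dist (ρ g⁻¹ z) (ρ h z) := by
  rw [← (ρ g).dist_eq (ρ g⁻¹ z), map_inv, IsometryEquiv.apply_inv_self, map_mul,
    IsometryEquiv.mul_apply]

lemma transLen_mul_le (g h : G) (p w : T) :
    transLen ρ (g * h) ≤ dist p (ρ g p) + dist w (ρ h w) + 2 * dist p w := by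
  have h₁ := dist_triangle4 (ρ g⁻¹ p) p w (ρ h w)
  have h₂ := dist_triangle (ρ g⁻¹ p) (ρ h w) (ρ h p)
  rw [dist_inv_apply] at h₁
  rw [(ρ h).dist_eq, dist_comm w p] at h₂
  linarith [transLen_le_dist ρ (g * h) p, dist_mul_apply ρ g h p]

variable {ρ}

lemma IsRealTree.dist_mul_apply_eq (hT : IsRealTree T) {g h : G} {B : Set T} {z w : T}
    (hB : IsSubtree B) (hinv : ∀ c, c ∈ B ↔ ρ h c ∈ B) (hz : IsGate B z w)
    (hgz : IsGate B (ρ g⁻¹ z) w) (hw : w ≠ ρ h w) :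
    dist z (ρ (g * h) z) = dist (ρ g⁻¹ z) w + dist w (ρ h w) + dist w z := by
  rw [dist_mul_apply, hT.dist_eq_of_isGate_ne hB hgz (hz.map hinv) hw, (ρ h).dist_eq]

namespace IsAxis

variable {g : G} {A : Set T}

lemma isSubtree (hT : IsRealTree T) (hA : IsAxis ρ g A) : IsSubtree A := by
  obtain ⟨⟨f, hf, rfl⟩, -⟩ := hA
  exact hT.isSubtree_range hf

lemma exists_isGate (hT : IsRealTree T) (hA : IsAxis ρ g A) (z : T) : ∃ p, IsGate A z p := by
  obtain ⟨⟨f, hf, rfl⟩, -⟩ := hA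
  exact hT.exists_isGate_range hf z

lemma inv (hA : IsAxis ρ g A) : IsAxis ρ g⁻¹ A := by
  obtain ⟨hline, hinv, τ, hτ, hdisp⟩ := hA
  have hinv' : ∀ c, c ∈ A ↔ ρ g⁻¹ c ∈ A := fun c => by
    rw [hinv (ρ g⁻¹ c), map_inv, IsometryEquiv.apply_inv_self]
  refine ⟨hline, hinv', τ, hτ, fun c hc => ?_⟩
  rw [← hdisp _ ((hinv' c).1 hc), map_inv, IsometryEquiv.apply_inv_self, dist_comm]

lemma dist_apply_eq (hT : IsRealTree T) (hA : IsAxis ρ g A) {z p : T} (hp : IsGate A z p) :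
    dist z (ρ g z) = dist p (ρ g p) + 2 * dist z p := by
  have hne : p ≠ ρ g p := fun h => by
    obtain ⟨-, -, τ, hτ, hdisp⟩ := hA
    linarith [hdisp p hp.1, dist_self p, congrArg (dist p) h]
  rw [hT.dist_eq_of_isGate_ne (hA.isSubtree hT) hp (hp.map hA.2.1) hne, (ρ g).dist_eq,
    dist_comm p z]
  ring

lemma transLen_eq (hT : IsRealTree T) (hA : IsAxis ρ g A) {p : T} (hp : p ∈ A) :
    transLen ρ g = dist p (ρ g p) := by
  obtain ⟨τ, -, hdisp⟩ := hA.2.2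
  have : Nonempty T := ⟨p⟩
  refine le_antisymm (transLen_le_dist ρ g p) (le_ciInf fun z => ?_)
  obtain ⟨q, hq⟩ := hA.exists_isGate hT z
  rw [hA.dist_apply_eq hT hq, hdisp q hq.1, hdisp p hp]
  linarith [dist_nonneg (x := z) (y := q)]

lemma charSet_eq (hT : IsRealTree T) (hA : IsAxis ρ g A) : charSet ρ g = A := by
  ext z
  obtain ⟨p, hp⟩ := hA.exists_isGate hT z
  refine ⟨fun hz => ?_, fun hz => (hA.transLen_eq hT hz).symm⟩
  have hz : dist z (ρ g z) = transLen ρ g := hz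
  rw [hA.dist_apply_eq hT hp, hA.transLen_eq hT hp.1] at hz
  rw [dist_eq_zero.1 (by linarith : dist z p = 0)]
  exact hp.1

lemma transLen_pos (hT : IsRealTree T) (hA : IsAxis ρ g A) : 0 < transLen ρ g := by
  obtain ⟨f, -, rfl⟩ := hA.1
  obtain ⟨τ, hτ, hdisp⟩ := hA.2.2
  rwa [hA.transLen_eq hT (mem_range_self 0), hdisp _ (mem_range_self 0)]

end IsAxis

lemma IsRealTree.transLen_mul_lt_dist (hT : IsRealTree T) {g h : G} {A B : Set T}
    (hA : IsAxis ρ g A) (hB : IsAxis ρ h B) {x q : T} (hq : IsGate A x q)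
    (hfar : ∀ b ∈ B, ∀ u, IsGate A b u → transLen ρ g < dist q u) :
    transLen ρ (g * h) < dist x (ρ (g * h) x) := by
  have hAsub := hA.isSubtree hT
  have hBsub := hB.isSubtree hT
  have hτ := hA.transLen_pos hT
  obtain ⟨w, hw⟩ := hB.exists_isGate hT q
  obtain ⟨p, hp⟩ := hA.exists_isGate hT w
  have hqp : transLen ρ g < dist q p := hfar w hw.1 p hp
  have hgate_ne : ∀ a, dist a q ≤ transLen ρ g → ∀ b ∈ B, ∃ u, IsGate A b u ∧ u ≠ a :=
    fun a ha b hb => by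
      obtain ⟨u, hu⟩ := hA.exists_isGate hT b
      refine ⟨u, hu, fun hua => ?_⟩
      subst hua
      linarith [hfar b hb u hu, dist_comm u q]
  have hα : IsGate A (ρ g⁻¹ x) (ρ g⁻¹ q) := hq.map hA.inv.2.1
  have hαq : dist (ρ g⁻¹ q) q = transLen ρ g := by
    rw [dist_inv_apply, hA.transLen_eq hT hq.1]
  have hαp : ρ g⁻¹ q ≠ p := fun hαp => by
    rw [hαp] at hαq
    linarith [dist_comm p q]
  have hxw : IsGate B x w :=
    hT.isGate_of_isGate_of_forall_ne hAsub hq hw (hgate_ne q (by rw [dist_self]; exact hτ.le))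
  have hαw : IsGate B (ρ g⁻¹ q) w := by
    obtain ⟨w', hw'⟩ := hB.exists_isGate hT (ρ g⁻¹ q)
    have hlt : dist (ρ g⁻¹ q) q < dist q w := by
      linarith [hp.2 q hq.1, dist_comm p q, dist_comm w q, dist_nonneg (x := w) (y := p)]
    rwa [← hT.isGate_eq_of_dist_lt hBsub hw' hw hlt]
  have hgxw : IsGate B (ρ g⁻¹ x) w :=
    hT.isGate_of_isGate_of_forall_ne hAsub hα hαw (hgate_ne _ hαq.le)
  have hwh : w ≠ ρ h w := fun hwh => by
    linarith [hB.transLen_pos hT, hB.transLen_eq hT hw.1, congrArg (dist w) hwh, dist_self w]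
  rw [hT.dist_mul_apply_eq hBsub hB.2.1 hxw hgxw hwh]
  have hx := hT.dist_eq_of_isGate_ne hAsub hq hp (dist_pos.1 (hτ.trans hqp))
  have hgx := hT.dist_eq_of_isGate_ne hAsub hα hp hαp
  linarith [transLen_mul_le ρ g h p w, hA.transLen_eq hT hp.1, dist_comm w x, dist_comm p w,
    dist_nonneg (x := x) (y := q), dist_nonneg (x := ρ g⁻¹ x) (y := ρ g⁻¹ q),
    dist_nonneg (x := ρ g⁻¹ q) (y := p)]

end Action

theorem charSet_mul_disjoint_of_far_projections_general
    (G : Type*) [Group G] (T : Type*) [MetricSpace T] (hT : IsRealTree T)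
    (ρ : G →* (T ≃ᵢ T)) (g h h' : G)
    (hg : Loxodromic ρ g) (hh : Loxodromic ρ h)
    (hfar : ∃ d : ℝ, transLen ρ g < d ∧
      ∀ y ∈ projSet (charSet ρ h) (charSet ρ g),
        ∀ y' ∈ projSet (charSet ρ h') (charSet ρ g), d ≤ dist y y') :
    charSet ρ (g * h) ∩ charSet ρ h' = ∅ := by
  obtain ⟨d, hd, hfar⟩ := hfar
  obtain ⟨A, hA⟩ := hg
  obtain ⟨B, hB⟩ := hh
  rw [hA.charSet_eq hT, hB.charSet_eq hT] at hfar
  refine eq_empty_iff_forall_notMem.2 fun x ⟨hx, hx'⟩ => ?_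
  obtain ⟨q, hq⟩ := hA.exists_isGate hT x
  have hqfar : ∀ b ∈ B, ∀ u, IsGate A b u → transLen ρ g < dist q u := fun b hb u hu =>
    hd.trans_le (dist_comm u q ▸ hfar u (hu.mem_projSet hb) q (hq.mem_projSet hx'))
  exact (hT.transLen_mul_lt_dist hA hB hq hqfar).ne' hx

/-- If the projections of the axes of `h` and `h'` onto the axis of `g` are at distance
greater than the translation length of `g`, then the characteristic set of `g * h` is
disjoint from the axis of `h'`. -/
theorem charSet_mul_disjoint_of_far_projections
    (G : Type*) [Group G] (T : Type*) [MetricSpace T] (hT : IsRealTree T)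
    (ρ : G →* (T ≃ᵢ T)) (g h h' : G)
    (hg : Loxodromic ρ g) (hh : Loxodromic ρ h) (hh' : Loxodromic ρ h')
    (hfar : ∃ d : ℝ, transLen ρ g < d ∧
      ∀ y ∈ projSet (charSet ρ h) (charSet ρ g),
        ∀ y' ∈ projSet (charSet ρ h') (charSet ρ g), d ≤ dist y y') :
    charSet ρ (g * h) ∩ charSet ρ h' = ∅ :=
  charSet_mul_disjoint_of_far_projections_general G T hT ρ g h h' hg hh hfar
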